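/- arXiv:1202.0942 — 2 statements merged into one kernel-verified Lean document; each statement's English description precedes it below -/
import Mathlib

section
/- Let f : [a,b] → ℝ be such that f' is absolutely continuous on [a,b] and f'' ∈ L^∞([a,b]). Then for all x ∈ [a, (a+b)/2]: |∫_a^b f(t) dt - (1/4)[f(a)+f(x)+f(a+b-x)+f(b)](b-a) + ((b-a)/4)(x-(a+b)/2)(f'(x)-f'(a+b-x))| ≤ (1/3)[((a+3b)/4 - x)(x-a)² + ((a+b)/2 - x)³]·‖f''‖_∞. -/
/-! Integrating by parts twice on each of `[a, x]`, `[x, a + b - x]`, `[a + b - x, b]` against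
quadratics `(t - A) (t - B) / 2` (second derivative `1`) writes the error of the quadrature rule
as `∫ K f''` for a Peano kernel `K` that has constant sign on each of the three pieces. Hence the
error is at most `M ∫ |K|`, and `∫ |K|` is an explicit cubic in `x`. -/

open MeasureTheory Set

noncomputable def quadKernel (A B t : ℝ) : ℝ := (t - A) * (t - B) / 2

lemma continuous_quadKernel (A B : ℝ) : Continuous (quadKernel A B) := by
  unfold quadKernel; fun_prop

lemma hasDerivAt_quadKernel (A B t : ℝ) :
    HasDerivAt (quadKernel A B) (t - (A + B) / 2) t := by
  unfold quadKernel
  refine ((((hasDerivAt_id t).sub_const A).mul ((hasDerivAt_id t).sub_const B)).div_const 2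
    ).congr_deriv ?_
  simp only [id]; ring

lemma quadKernel_nonpos {A B t : ℝ} (hA : A ≤ t) (hB : t ≤ B) : quadKernel A B t ≤ 0 :=
  div_nonpos_of_nonpos_of_nonneg (mul_nonpos_of_nonneg_of_nonpos (by linarith) (by linarith))
    zero_le_two

lemma quadKernel_self_nonneg (A t : ℝ) : 0 ≤ quadKernel A A t :=
  div_nonneg (mul_self_nonneg _) zero_le_two

lemma integral_quadKernel (A B p q : ℝ) :
    ∫ t in p..q, quadKernel A B t
      = ((q - A) ^ 3 - (p - A) ^ 3) / 6 - (B - A) * ((q - A) ^ 2 - (p - A) ^ 2) / 4 := by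
  have hF : ∀ t ∈ uIcc p q,
      HasDerivAt (fun s => (s - A) ^ 3 / 6 - (B - A) * (s - A) ^ 2 / 4) (quadKernel A B t) t := by
    intro t _
    refine (((((hasDerivAt_id t).sub_const A).pow 3).div_const 6).sub
      ((((hasDerivAt_id t).sub_const A).pow 2).const_mul (B - A) |>.div_const 4)).congr_deriv ?_
    simp only [quadKernel, id]; ring
  rw [intervalIntegral.integral_eq_sub_of_hasDerivAt hF
    ((continuous_quadKernel A B).intervalIntegrable p q)]
  ring

lemma integral_quadKernel_mul_eq {f f' f'' : ℝ → ℝ} {p q : ℝ} (A B : ℝ)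
    (hf' : ∀ t ∈ uIcc p q, HasDerivAt f (f' t) t)
    (hf'' : ∀ t ∈ uIcc p q, HasDerivAt f' (f'' t) t)
    (hint : IntervalIntegrable f'' volume p q) :
    ∫ t in p..q, quadKernel A B t * f'' t
      = (quadKernel A B q * f' q - (q - (A + B) / 2) * f q)
        - (quadKernel A B p * f' p - (p - (A + B) / 2) * f p) + ∫ t in p..q, f t := by
  have hline : ∀ t ∈ uIcc p q, HasDerivAt (fun s => s - (A + B) / 2) 1 t :=
    fun t _ => (hasDerivAt_id t).sub_const _
  have hf'_cont : ContinuousOn f' (uIcc p q) :=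
    fun t ht => (hf'' t ht).continuousAt.continuousWithinAt
  rw [intervalIntegral.integral_mul_deriv_eq_deriv_mul (fun t _ => hasDerivAt_quadKernel A B t)
      hf'' ((continuous_id.sub continuous_const).intervalIntegrable p q) hint,
    intervalIntegral.integral_mul_deriv_eq_deriv_mul hline hf' intervalIntegrable_const
      hf'_cont.intervalIntegrable]
  simp only [one_mul]
  ring

lemma abs_integral_mul_le_of_nonneg {g h : ℝ → ℝ} {p q M : ℝ} (hpq : p ≤ q)
    (hg : IntervalIntegrable g volume p q) (hg0 : ∀ t ∈ Icc p q, 0 ≤ g t)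
    (hM : ∀ᵐ t, t ∈ Icc p q → |h t| ≤ M) :
    |∫ t in p..q, g t * h t| ≤ M * ∫ t in p..q, g t := by
  rw [← intervalIntegral.integral_const_mul, ← Real.norm_eq_abs]
  refine intervalIntegral.norm_integral_le_of_norm_le hpq ?_ (hg.const_mul M)
  filter_upwards [hM] with t ht htI
  have htI' : t ∈ Icc p q := Ioc_subset_Icc_self htI
  rw [norm_mul, Real.norm_eq_abs, Real.norm_eq_abs, abs_of_nonneg (hg0 t htI'), mul_comm M]
  exact mul_le_mul_of_nonneg_left (ht htI') (hg0 t htI')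

lemma abs_integral_mul_le_of_nonpos {g h : ℝ → ℝ} {p q M : ℝ} (hpq : p ≤ q)
    (hg : IntervalIntegrable g volume p q) (hg0 : ∀ t ∈ Icc p q, g t ≤ 0)
    (hM : ∀ᵐ t, t ∈ Icc p q → |h t| ≤ M) :
    |∫ t in p..q, g t * h t| ≤ -(M * ∫ t in p..q, g t) := by
  have h := abs_integral_mul_le_of_nonneg (g := fun t => -g t) hpq hg.neg
    (fun t ht => neg_nonneg.mpr (hg0 t ht)) hM
  simpa only [neg_mul, intervalIntegral.integral_neg, abs_neg, mul_neg] using h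

lemma integral_sub_companion_eq_sum_kernel_integrals {f f' f'' : ℝ → ℝ} {a b x : ℝ}
    (hf' : ∀ t ∈ Icc a b, HasDerivAt f (f' t) t)
    (hf'' : ∀ t ∈ Icc a b, HasDerivAt f' (f'' t) t)
    (hint : IntervalIntegrable f'' volume a b) (hax : a ≤ x) (hxm : x ≤ (a + b) / 2) :
    (∫ t in a..b, f t) - (1/4) * (f a + f x + f (a + b - x) + f b) * (b - a)
        + ((b - a)/4) * (x - (a + b)/2) * (f' x - f' (a + b - x))
      = (∫ t in a..x, quadKernel a ((a + b) / 2) t * f'' t)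
        + (∫ t in x..(a + b - x), quadKernel ((a + b) / 2) ((a + b) / 2) t * f'' t)
        + ∫ t in (a + b - x)..b, quadKernel ((a + b) / 2) b t * f'' t := by
  have ha : a ∈ Icc a b := ⟨le_rfl, by linarith⟩
  have hb : b ∈ Icc a b := ⟨by linarith, le_rfl⟩
  have hx : x ∈ Icc a b := ⟨hax, by linarith⟩
  have hy : a + b - x ∈ Icc a b := ⟨by linarith, by linarith⟩
  have parts : ∀ {p q}, p ∈ Icc a b → q ∈ Icc a b → ∀ A B,
      ∫ t in p..q, quadKernel A B t * f'' t
        = (quadKernel A B q * f' q - (q - (A + B) / 2) * f q)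
          - (quadKernel A B p * f' p - (p - (A + B) / 2) * f p) + ∫ t in p..q, f t :=
    fun hp hq A B => integral_quadKernel_mul_eq A B
      (fun t ht => hf' t (uIcc_subset_Icc hp hq ht))
      (fun t ht => hf'' t (uIcc_subset_Icc hp hq ht))
      (hint.mono_set (uIcc_of_le hb.1 ▸ uIcc_subset_Icc hp hq))
  have hf_int : ∀ {p q}, p ∈ Icc a b → q ∈ Icc a b → IntervalIntegrable f volume p q :=
    fun hp hq => ContinuousOn.intervalIntegrable fun t ht =>
      (hf' t (uIcc_subset_Icc hp hq ht)).continuousAt.continuousWithinAt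
  have hsplit : (∫ t in a..x, f t) + (∫ t in x..(a + b - x), f t)
      + (∫ t in (a + b - x)..b, f t) = ∫ t in a..b, f t := by
    rw [intervalIntegral.integral_add_adjacent_intervals (hf_int ha hx) (hf_int hx hy),
      intervalIntegral.integral_add_adjacent_intervals (hf_int ha hy) (hf_int hy hb)]
  rw [parts ha hx, parts hx hy, parts hy hb]
  simp only [quadKernel]
  linear_combination -hsplit

theorem companion_ostrowski_like_rearranged_general
    (a b : ℝ) (f f' f'' : ℝ → ℝ) (M : ℝ)
    (hf' : ∀ t ∈ Icc a b, HasDerivAt f (f' t) t)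
    (hf'' : ∀ t ∈ Icc a b, HasDerivAt f' (f'' t) t)
    (hint : IntervalIntegrable f'' volume a b)
    (hM : ∀ᵐ t ∂volume, t ∈ Icc a b → |f'' t| ≤ M)
    (x : ℝ) (hx : x ∈ Icc a ((a + b)/2)) :
    |(∫ t in a..b, f t) - (1/4) * (f a + f x + f (a + b - x) + f b) * (b - a)
      + ((b - a)/4) * (x - (a + b)/2) * (f' x - f' (a + b - x))|
    ≤ (1/3) * (((a + 3*b)/4 - x) * (x - a)^2 + ((a + b)/2 - x)^3) * M := by
  obtain ⟨hax, hxm⟩ := hx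
  rw [integral_sub_companion_eq_sum_kernel_integrals hf' hf'' hint hax hxm]
  have hM_on : ∀ {p q}, a ≤ p → q ≤ b → ∀ᵐ t, t ∈ Icc p q → |f'' t| ≤ M :=
    fun hp hq => hM.mono fun t ht hti => ht (Icc_subset_Icc hp hq hti)
  have hK_int : ∀ A B p q, IntervalIntegrable (quadKernel A B) volume p q :=
    fun A B => (continuous_quadKernel A B).intervalIntegrable
  have h1 := abs_integral_mul_le_of_nonpos hax (hK_int a ((a + b) / 2) _ _)
    (fun t ht => quadKernel_nonpos ht.1 (ht.2.trans hxm)) (hM_on le_rfl (by linarith))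
  have h2 := abs_integral_mul_le_of_nonneg (by linarith)
    (hK_int ((a + b) / 2) ((a + b) / 2) x (a + b - x))
    (fun t _ => quadKernel_self_nonneg _ t) (hM_on hax (by linarith))
  have h3 := abs_integral_mul_le_of_nonpos (by linarith) (hK_int ((a + b) / 2) b (a + b - x) b)
    (fun t ht => quadKernel_nonpos (by linarith [ht.1]) ht.2) (hM_on (by linarith) le_rfl)
  rw [integral_quadKernel] at h1 h2 h3
  calc _ ≤ _ := abs_add_three _ _ _
    _ ≤ _ := add_le_add_three h1 h2 h3
    _ = _ := by ring

theorem companion_ostrowski_like_rearranged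
    (a b : ℝ) (hab : a < b) (f f' f'' : ℝ → ℝ) (M : ℝ)
    (hf' : ∀ t ∈ Icc a b, HasDerivAt f (f' t) t)
    (hf'' : ∀ t ∈ Icc a b, HasDerivAt f' (f'' t) t)
    (hint : IntervalIntegrable f'' volume a b)
    (hM : ∀ᵐ t ∂volume, t ∈ Icc a b → |f'' t| ≤ M)
    (x : ℝ) (hx : x ∈ Icc a ((a + b)/2)) :
    |(∫ t in a..b, f t) - (1/4) * (f a + f x + f (a + b - x) + f b) * (b - a)
      + ((b - a)/4) * (x - (a + b)/2) * (f' x - f' (a + b - x))|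
    ≤ (1/3) * (((a + 3*b)/4 - x) * (x - a)^2 + ((a + b)/2 - x)^3) * M :=
  companion_ostrowski_like_rearranged_general a b f f' f'' M hf' hf'' hint hM x hx
end

section
/- Let X be a random variable with values in [a,b], with absolutely continuous probability density f : [a,b] → [0,1] whose derivative f' is essentially bounded, and cumulative distribution F(x) = ∫_a^x f(t) dt. Then for all x ∈ [a,(a+b)/2]: |(1/2)[(F(x)+F(a+b-x))/2 + 1/2] - (1/2)(x-(a+b)/2)·(f(x)-f(a+b-x))/2 - (b - E(X))/(b-a)| ≤ [((a+3b)/4 - x)(x-a)²/(3(b-a)³) + (1/3)((a+b)/2 - x)³/(b-a)³]·(b-a)²·‖f'‖_∞, where E(X) = ∫_a^b t f(t) dt. -/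
/-!
With `m = (a + b) / 2`, let `K` be the Peano kernel equal to `(m - s)(s - a)` on `[a, x]`,
`-(s - m)²` on `[x, a + b - x]` and `(b - s)(s - m)` on `[a + b - x, b]`. Integrating `K f'` by
parts on each piece (every piece is `(p - s)(s - q)`, with derivative `p + q - 2s`) shows that
the left-hand side is `|∫ₐᵇ K f'| / (2(b - a))`, using `∫ₐᵇ f = 1` and `∫ₐᵇ s f = E`.
Hence it is at most `‖f'‖_∞ ∫ₐᵇ |K| / (2(b - a))`, and `K` has constant sign on each piece,
so `∫ₐᵇ |K|` is an explicit cubic in `x`.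
-/

open MeasureTheory Set

lemma integral_sub_mul_sub (p q c d : ℝ) :
    ∫ s in c..d, (p - s) * (s - q) =
      -(d ^ 3 - c ^ 3) / 3 + (p + q) * (d ^ 2 - c ^ 2) / 2 - p * q * (d - c) := by
  have hG : ∀ s : ℝ, HasDerivAt (fun s ↦ -s ^ 3 / 3 + (p + q) * s ^ 2 / 2 - p * q * s)
      ((p - s) * (s - q)) s := fun s ↦ by
    refine ((((hasDerivAt_pow 3 s).neg.div_const 3).add
      (((hasDerivAt_pow 2 s).const_mul (p + q)).div_const 2)).sub
      ((hasDerivAt_id s).const_mul (p * q))).congr_deriv ?_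
    norm_num; ring
  rw [intervalIntegral.integral_eq_sub_of_hasDerivAt (fun s _ ↦ hG s)
    (by apply Continuous.intervalIntegrable; fun_prop)]
  ring

lemma integral_sub_mul_sub_mul_deriv (p q : ℝ) {c d : ℝ} {f f' : ℝ → ℝ}
    (hf : ∀ t ∈ uIcc c d, HasDerivAt f (f' t) t) (hf' : IntervalIntegrable f' volume c d) :
    ∫ s in c..d, (p - s) * (s - q) * f' s =
      (p - d) * (d - q) * f d - (p - c) * (c - q) * f c
        - (p + q) * (∫ s in c..d, f s) + 2 * ∫ s in c..d, s * f s := by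
  have hK : ∀ s : ℝ, HasDerivAt (fun s ↦ (p - s) * (s - q)) (p + q - 2 * s) s := fun s ↦ by
    refine (((hasDerivAt_id s).const_sub p).mul ((hasDerivAt_id s).sub_const q)).congr_deriv ?_
    simp only [id_eq]; ring
  have hfc : ContinuousOn f (uIcc c d) := fun t ht ↦ (hf t ht).continuousAt.continuousWithinAt
  rw [intervalIntegral.integral_mul_deriv_eq_deriv_mul (fun s _ ↦ hK s) hf
    (by apply Continuous.intervalIntegrable; fun_prop) hf']
  have hsplit : ∫ s in c..d, (p + q - 2 * s) * f s
      = (p + q) * (∫ s in c..d, f s) - 2 * ∫ s in c..d, s * f s := by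
    simp only [sub_mul, mul_assoc]
    rw [intervalIntegral.integral_sub, intervalIntegral.integral_const_mul,
      intervalIntegral.integral_const_mul]
    · exact hfc.intervalIntegrable.const_mul _
    · exact (continuousOn_id.mul hfc).intervalIntegrable.const_mul _
  rw [hsplit]; ring

lemma abs_integral_mul_le_integral_abs_mul {K g : ℝ → ℝ} {c d M : ℝ} (hcd : c ≤ d)
    (hK : IntervalIntegrable K volume c d) (hg : ∀ᵐ t, t ∈ Ioc c d → |g t| ≤ M) :
    |∫ s in c..d, K s * g s| ≤ (∫ s in c..d, |K s|) * M := by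
  rw [← intervalIntegral.integral_mul_const]
  refine intervalIntegral.norm_integral_le_of_norm_le (f := fun s ↦ K s * g s) hcd ?_
    (hK.abs.mul_const M)
  filter_upwards [hg] with t ht hmem
  rw [Real.norm_eq_abs, abs_mul]
  exact mul_le_mul_of_nonneg_left (ht hmem) (abs_nonneg _)

lemma companion_kernel_identity {a b x : ℝ} {f f' : ℝ → ℝ} (hax : a ≤ x) (hxm : x ≤ (a + b) / 2)
    (hf : ∀ t ∈ Icc a b, HasDerivAt f (f' t) t) (hf' : IntervalIntegrable f' volume a b) :
    (∫ s in a..x, ((a + b) / 2 - s) * (s - a) * f' s)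
      + (∫ s in x..a + b - x, ((a + b) / 2 - s) * (s - (a + b) / 2) * f' s)
      + (∫ s in a + b - x..b, (b - s) * (s - (a + b) / 2) * f' s)
    = (b - a) / 2 * (((a + b) / 2 - x) * (f x - f (a + b - x))
        + (∫ s in a..x, f s) + ∫ s in a..a + b - x, f s)
      + 2 * (∫ s in a..b, s * f s) - (a + 3 * b) / 2 * ∫ s in a..b, f s := by
  have hab : uIcc a b = Icc a b := uIcc_of_le (by linarith)
  have hsub : ∀ {c d}, c ∈ Icc a b → d ∈ Icc a b → uIcc c d ⊆ uIcc a b := fun hc hd ↦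
    uIcc_subset_uIcc (hab ▸ hc) (hab ▸ hd)
  have ha : a ∈ Icc a b := ⟨le_rfl, by linarith⟩
  have hb : b ∈ Icc a b := ⟨by linarith, le_rfl⟩
  have hx : x ∈ Icc a b := ⟨hax, by linarith⟩
  have hy : a + b - x ∈ Icc a b := ⟨by linarith, by linarith⟩
  have hfc : ContinuousOn f (uIcc a b) := fun t ht ↦
    (hf t (hab ▸ ht)).continuousAt.continuousWithinAt
  have hif : ∀ {c}, c ∈ Icc a b → IntervalIntegrable f volume a c := fun hc ↦
    hfc.intervalIntegrable.mono_set (hsub ha hc)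
  have hisf : ∀ {c}, c ∈ Icc a b → IntervalIntegrable (fun s ↦ s * f s) volume a c := fun hc ↦
    (continuousOn_id.mul hfc).intervalIntegrable.mono_set (hsub ha hc)
  have hibp : ∀ {c d}, c ∈ Icc a b → d ∈ Icc a b → ∀ p q : ℝ,
      ∫ s in c..d, (p - s) * (s - q) * f' s =
        (p - d) * (d - q) * f d - (p - c) * (c - q) * f c
          - (p + q) * (∫ s in c..d, f s) + 2 * ∫ s in c..d, s * f s := fun hc hd p q ↦
    integral_sub_mul_sub_mul_deriv p q (fun t ht ↦ hf t (hab ▸ hsub hc hd ht))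
      (hf'.mono_set (hsub hc hd))
  rw [hibp ha hx, hibp hx hy, hibp hy hb,
    ← intervalIntegral.integral_interval_sub_left (hif hy) (hif hx),
    ← intervalIntegral.integral_interval_sub_left (hif hb) (hif hy),
    ← intervalIntegral.integral_interval_sub_left (hisf hy) (hisf hx),
    ← intervalIntegral.integral_interval_sub_left (hisf hb) (hisf hy)]
  ring

lemma integral_abs_sub_mul_sub_of_le {p q c d : ℝ} (hqc : q ≤ c) (hcd : c ≤ d) (hdp : d ≤ p) :
    ∫ s in c..d, |(p - s) * (s - q)| = ∫ s in c..d, (p - s) * (s - q) := by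
  refine intervalIntegral.integral_congr fun s hs ↦ abs_of_nonneg ?_
  rw [uIcc_of_le hcd] at hs
  exact mul_nonneg (by linarith [hs.2]) (by linarith [hs.1])

lemma companion_kernel_integral_abs {a b x : ℝ} (hax : a ≤ x) (hxm : x ≤ (a + b) / 2) :
    (∫ s in a..x, |((a + b) / 2 - s) * (s - a)|)
      + (∫ s in x..a + b - x, |((a + b) / 2 - s) * (s - (a + b) / 2)|)
      + (∫ s in a + b - x..b, |(b - s) * (s - (a + b) / 2)|)
    = 2 / 3 * (((a + 3 * b) / 4 - x) * (x - a) ^ 2 + ((a + b) / 2 - x) ^ 3) := by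
  have hmid : ∫ s in x..a + b - x, |((a + b) / 2 - s) * (s - (a + b) / 2)|
      = -∫ s in x..a + b - x, ((a + b) / 2 - s) * (s - (a + b) / 2) := by
    rw [← intervalIntegral.integral_neg]
    refine intervalIntegral.integral_congr fun s _ ↦ abs_of_nonpos ?_
    nlinarith [sq_nonneg (s - (a + b) / 2)]
  rw [integral_abs_sub_mul_sub_of_le le_rfl hax (by linarith), hmid,
    integral_abs_sub_mul_sub_of_le (by linarith) (by linarith) le_rfl,
    integral_sub_mul_sub, integral_sub_mul_sub, integral_sub_mul_sub]
  ring

lemma abs_companion_kernel_integral_le {a b x M : ℝ} {f' : ℝ → ℝ} (hax : a ≤ x)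
    (hxm : x ≤ (a + b) / 2) (hM : ∀ᵐ t, t ∈ Icc a b → |f' t| ≤ M) :
    |(∫ s in a..x, ((a + b) / 2 - s) * (s - a) * f' s)
      + (∫ s in x..a + b - x, ((a + b) / 2 - s) * (s - (a + b) / 2) * f' s)
      + (∫ s in a + b - x..b, (b - s) * (s - (a + b) / 2) * f' s)|
    ≤ 2 / 3 * (((a + 3 * b) / 4 - x) * (x - a) ^ 2 + ((a + b) / 2 - x) ^ 3) * M := by
  have hM' : ∀ {c d}, a ≤ c → d ≤ b → ∀ᵐ t, t ∈ Ioc c d → |f' t| ≤ M := fun hc hd ↦ by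
    filter_upwards [hM] with t ht hmem using ht ⟨hc.trans hmem.1.le, hmem.2.trans hd⟩
  have hK : ∀ p q c d : ℝ, IntervalIntegrable (fun s ↦ (p - s) * (s - q)) volume c d :=
    fun p q c d ↦ by apply Continuous.intervalIntegrable; fun_prop
  rw [← companion_kernel_integral_abs hax hxm, add_mul, add_mul]
  refine (abs_add_three _ _ _).trans (add_le_add_three ?_ ?_ ?_)
  · exact abs_integral_mul_le_integral_abs_mul hax (hK _ _ _ _) (hM' le_rfl (by linarith))
  · exact abs_integral_mul_le_integral_abs_mul (by linarith) (hK _ _ _ _) (hM' hax (by linarith))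
  · exact abs_integral_mul_le_integral_abs_mul (by linarith) (hK _ _ _ _) (hM' (by linarith) le_rfl)

theorem pdf_companion_inequality_general
    (a b : ℝ) (hab : a < b) (f f' : ℝ → ℝ) (M : ℝ)
    (hf' : ∀ t ∈ Icc a b, HasDerivAt f (f' t) t)
    (hint : IntervalIntegrable f' volume a b)
    (hM : ∀ᵐ t ∂volume, t ∈ Icc a b → |f' t| ≤ M)
    (hdens : (∫ t in a..b, f t) = 1)
    (F : ℝ → ℝ) (hF : ∀ y, F y = ∫ t in a..y, f t)
    (E : ℝ) (hE : E = ∫ t in a..b, t * f t)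
    (x : ℝ) (hx : x ∈ Icc a ((a + b)/2)) :
    |(1/2) * ((F x + F (a + b - x)) / 2 + 1/2)
      - (1/2) * (x - (a + b)/2) * ((f x - f (a + b - x)) / 2)
      - (b - E) / (b - a)|
    ≤ (((a + 3*b)/4 - x) * (x - a)^2 / (3 * (b - a)^3)
       + (1/3) * (((a + b)/2 - x)^3 / (b - a)^3)) * (b - a)^2 * M := by
  obtain ⟨hax, hxm⟩ := hx
  have hba : 0 < b - a := sub_pos.2 hab
  have hlhs : (1/2) * ((F x + F (a + b - x)) / 2 + 1/2)
      - (1/2) * (x - (a + b)/2) * ((f x - f (a + b - x)) / 2) - (b - E) / (b - a)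
      = ((∫ s in a..x, ((a + b) / 2 - s) * (s - a) * f' s)
        + (∫ s in x..a + b - x, ((a + b) / 2 - s) * (s - (a + b) / 2) * f' s)
        + (∫ s in a + b - x..b, (b - s) * (s - (a + b) / 2) * f' s)) / (2 * (b - a)) := by
    rw [companion_kernel_identity hax hxm hf' hint, hdens, hF, hF, hE]
    field_simp
    ring
  have hden : 0 < 2 * (b - a) := by positivity
  rw [hlhs, abs_div, abs_of_pos hden, div_le_iff₀ hden]
  refine (abs_companion_kernel_integral_le hax hxm hM).trans_eq ?_
  field_simp

theorem pdf_companion_inequality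
    (a b : ℝ) (hab : a < b) (f f' : ℝ → ℝ) (M : ℝ)
    (hrange : ∀ t ∈ Icc a b, f t ∈ Icc (0:ℝ) 1)
    (hf' : ∀ t ∈ Icc a b, HasDerivAt f (f' t) t)
    (hint : IntervalIntegrable f' volume a b)
    (hM : ∀ᵐ t ∂volume, t ∈ Icc a b → |f' t| ≤ M)
    (hdens : (∫ t in a..b, f t) = 1)
    (F : ℝ → ℝ) (hF : ∀ y, F y = ∫ t in a..y, f t)
    (E : ℝ) (hE : E = ∫ t in a..b, t * f t)
    (x : ℝ) (hx : x ∈ Icc a ((a + b)/2)) :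
    |(1/2) * ((F x + F (a + b - x)) / 2 + 1/2)
      - (1/2) * (x - (a + b)/2) * ((f x - f (a + b - x)) / 2)
      - (b - E) / (b - a)|
    ≤ (((a + 3*b)/4 - x) * (x - a)^2 / (3 * (b - a)^3)
       + (1/3) * (((a + b)/2 - x)^3 / (b - a)^3)) * (b - a)^2 * M :=
  pdf_companion_inequality_general a b hab f f' M hf' hint hM hdens F hF E hE x hx
end
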